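/- arXiv:2209.14376 — 3 statements merged into one kernel-verified Lean document; each statement's English description precedes it below -/
import Mathlib

section
/- Suppose the SED system assumption holds and A is (τ,e^{−ρ})-stable. Then for all integers k, m ≥ 1, the block M_{km} is (c_M, γ_M)-SED and J_k is (c_J, γ_M)-SED, where c_M = b²N²(τ²‖Q‖/(1−e^{−2ρ}) + 2q) + bN(s + τ‖S‖) + r, c_J = bN(τ²‖Q‖/(1−e^{−2ρ}) + 2q) + s + τ‖S‖, and γ_M = γρ/(ρ + ln(aN)). -/
/-!
By stability, the summand `(Aᵗ)ᵀ Q Aᵗ⁺ⁿ` of `G Aⁿ` has norm at most `τ² ‖Q‖ e^{-ρ(2t+n)}`, and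
since a product of SED matrices is SED with the constant multiplied by `N`, its `(i,j)` block is
also at most `q (aN)^{2t+n} e^{-γ dist(i,j)}`. The first bound decays in time, the second in space.
They cross at `2t + n = γ dist(i,j) / (ρ + log(aN))`; summing the smaller one, geometric on either
side of the crossing, gives the rate `γρ / (ρ + log(aN))`. `S Aⁿ` is handled the same way, and
`M_{km}`, `J_k` are sums of products of these with `B`, `Bᵀ` and `R`.
-/

open scoped Matrix.Norms.L2Operator
open Matrix

noncomputable section

/-- Index type of a vector partitioned into `N` agent blocks of sizes `d`. -/
abbrev BIdx {N : ℕ} (d : Fin N → ℕ) : Type := (i : Fin N) × Fin (d i)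

/-- The `(i,j)` agent block of a block-partitioned matrix. -/
def blk {N : ℕ} {d e : Fin N → ℕ} (X : Matrix (BIdx d) (BIdx e) ℝ) (i j : Fin N) :
    Matrix (Fin (d i)) (Fin (e j)) ℝ :=
  Matrix.of fun a b => X ⟨i, a⟩ ⟨j, b⟩

/-- `X` is `(c, γ)`-spatially exponentially decaying w.r.t. `dist`:
`‖[X]_{ij}‖ ≤ c e^{-γ dist(i,j)}` for all agents `i, j`. -/
def IsSED {N : ℕ} {d e : Fin N → ℕ} (dist : Fin N → Fin N → ℝ) (c γ : ℝ)
    (X : Matrix (BIdx d) (BIdx e) ℝ) : Prop :=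
  ∀ i j : Fin N, ‖blk X i j‖ ≤ c * Real.exp (-γ * dist i j)

/-- `dist` is nonnegative, symmetric, and satisfies the triangle inequality. -/
structure IsDist {N : ℕ} (dist : Fin N → Fin N → ℝ) : Prop where
  nonneg : ∀ i j, 0 ≤ dist i j
  symm : ∀ i j, dist i j = dist j i
  triangle : ∀ i j k, dist i j ≤ dist i k + dist k j

/-- `A` is `(τ, e^{-ρ})`-stable: `‖A^k‖ ≤ τ e^{-ρ k}` for every `k ≥ 0`. -/
def IsExpStable {n : Type*} [Fintype n] [DecidableEq n] (τ ρ : ℝ)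
    (A : Matrix n n ℝ) : Prop :=
  ∀ k : ℕ, ‖A ^ k‖ ≤ τ * Real.exp (-ρ * (k : ℝ))

/-- Smallest eigenvalue of a symmetric matrix, characterized via the Loewner order. -/
def eigMin {n : Type*} [Fintype n] [DecidableEq n] (A : Matrix n n ℝ) : ℝ :=
  sSup {t : ℝ | (A - t • (1 : Matrix n n ℝ)).PosSemidef}

/-- Largest eigenvalue of a symmetric matrix, characterized via the Loewner order. -/
def eigMax {n : Type*} [Fintype n] [DecidableEq n] (A : Matrix n n ℝ) : ℝ :=
  sInf {t : ℝ | (t • (1 : Matrix n n ℝ) - A).PosSemidef}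

/-- `G = ∑_{t=0}^∞ (A^t)ᵀ Q A^t`. -/
def Gmat {ιx : Type*} [Fintype ιx] [DecidableEq ιx] (A Q : Matrix ιx ιx ℝ) :
    Matrix ιx ιx ℝ :=
  ∑' t : ℕ, (A ^ t)ᵀ * Q * (A ^ t)

section LQRDefs

variable {ιx ιu : Type*} [Fintype ιx] [DecidableEq ιx] [Fintype ιu] [DecidableEq ιu]

/-- The `(k,m)` block of `M^{(H)}` (blocks indexed by `1 ≤ k, m ≤ H`). -/
def Mblk (A : Matrix ιx ιx ℝ) (B : Matrix ιx ιu ℝ) (Q : Matrix ιx ιx ℝ)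
    (R : Matrix ιu ιu ℝ) (S : Matrix ιu ιx ℝ) (k m : ℕ) : Matrix ιu ιu ℝ :=
  if k = m then Bᵀ * Gmat A Q * B + R
  else if m < k then Bᵀ * Gmat A Q * A ^ (k - m) * B + S * A ^ (k - m - 1) * B
  else Bᵀ * (A ^ (m - k))ᵀ * Gmat A Q * B + Bᵀ * (A ^ (m - k - 1))ᵀ * Sᵀ

/-- The `k`-th block of `J^{(H)}` (blocks indexed by `1 ≤ k ≤ H`). -/
def Jblk (A : Matrix ιx ιx ℝ) (B : Matrix ιx ιu ℝ) (Q : Matrix ιx ιx ℝ)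
    (S : Matrix ιu ιx ℝ) (k : ℕ) : Matrix ιu ιx ℝ :=
  Bᵀ * Gmat A Q * A ^ k + S * A ^ (k - 1)

/-- The `H × H` block matrix `M^{(H)}`. -/
def MH (H : ℕ) (A : Matrix ιx ιx ℝ) (B : Matrix ιx ιu ℝ) (Q : Matrix ιx ιx ℝ)
    (R : Matrix ιu ιu ℝ) (S : Matrix ιu ιx ℝ) :
    Matrix (Fin H × ιu) (Fin H × ιu) ℝ :=
  Matrix.of fun p q => Mblk A B Q R S ((p.1 : ℕ) + 1) ((q.1 : ℕ) + 1) p.2 q.2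

/-- The `H × 1` block matrix `J^{(H)}`. -/
def JH (H : ℕ) (A : Matrix ιx ιx ℝ) (B : Matrix ιx ιu ℝ) (Q : Matrix ιx ιx ℝ)
    (S : Matrix ιu ιx ℝ) : Matrix (Fin H × ιu) ιx ℝ :=
  Matrix.of fun p b => Jblk A B Q S ((p.1 : ℕ) + 1) p.2 b

/-- `L^{(H)} = -(M^{(H)})⁻¹ J^{(H)}`. -/
def LH (H : ℕ) (A : Matrix ιx ιx ℝ) (B : Matrix ιx ιu ℝ) (Q : Matrix ιx ιx ℝ)
    (R : Matrix ιu ιu ℝ) (S : Matrix ιu ιx ℝ) : Matrix (Fin H × ιu) ιx ℝ :=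
  -(MH H A B Q R S)⁻¹ * JH H A B Q S

/-- The `k`-th block `L_k^{(H)}` of `L^{(H)}` (0-based index `k : Fin H` is block `k+1`). -/
def LHblk (H : ℕ) (A : Matrix ιx ιx ℝ) (B : Matrix ιx ιu ℝ) (Q : Matrix ιx ιx ℝ)
    (R : Matrix ιu ιu ℝ) (S : Matrix ιu ιx ℝ) (k : Fin H) : Matrix ιu ιx ℝ :=
  Matrix.of fun a b => LH H A B Q R S (k, a) b

/-- `P` solves the discrete algebraic Riccati equation. -/
def IsDARE (A : Matrix ιx ιx ℝ) (B : Matrix ιx ιu ℝ) (Q : Matrix ιx ιx ℝ)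
    (R : Matrix ιu ιu ℝ) (S : Matrix ιu ιx ℝ) (P : Matrix ιx ιx ℝ) : Prop :=
  P = Aᵀ * P * A - (Aᵀ * P * B + Sᵀ) * (R + Bᵀ * P * B)⁻¹ * (Bᵀ * P * A + S) + Q

/-- The optimal LQR state-feedback gain `K = (R + BᵀPB)⁻¹(BᵀPA + S)`. -/
def optGain (A : Matrix ιx ιx ℝ) (B : Matrix ιx ιu ℝ)
    (R : Matrix ιu ιu ℝ) (S : Matrix ιu ιx ℝ) (P : Matrix ιx ιx ℝ) : Matrix ιu ιx ℝ :=
  (R + Bᵀ * P * B)⁻¹ * (Bᵀ * P * A + S)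

end LQRDefs

/-- The constant `c_M`. -/
def cMconst (N : ℕ) (τ ρ b q r s nQ nS : ℝ) : ℝ :=
  b ^ 2 * (N : ℝ) ^ 2 * (τ ^ 2 * nQ / (1 - Real.exp (-(2 * ρ))) + 2 * q)
    + b * (N : ℝ) * (s + τ * nS) + r

/-- The constant `c_J`. -/
def cJconst (N : ℕ) (τ ρ b q s nQ nS : ℝ) : ℝ :=
  b * (N : ℝ) * (τ ^ 2 * nQ / (1 - Real.exp (-(2 * ρ))) + 2 * q) + s + τ * nS

/-- The constant `c_K` of the open-loop-stable spatial-decay theorem. -/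
def cKconst (N : ℕ) (τ ρ b q s nB nQ nS nK lmin : ℝ) : ℝ :=
  2 * τ ^ 3 * (nB ^ 2 * nK * nQ + nB * nK * nS)
      / ((1 - Real.exp (-(2 * ρ))) ^ ((5 : ℝ) / 2) * lmin)
    + 2 * τ ^ 2 * (nB * nQ + nS) / ((1 - Real.exp (-(2 * ρ))) ^ 2 * lmin)
    + 2 * cJconst N τ ρ b q s nQ nS

/-- The constant `γ_K` of the open-loop-stable spatial-decay theorem. -/
def gammaKconst (N : ℕ) (γ τ ρ a b q r s nB nQ nS lmin lmaxR : ℝ) : ℝ :=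
  (γ * ρ * lmin / (ρ + Real.log (a * (N : ℝ)))) *
    (1 / ((lmaxR + 4 * τ ^ 2 * (nB ^ 2 * nQ + nB * nS)
          / (1 - Real.exp (-(2 * ρ))) ^ 2) *
        Real.log (γ * cMconst N τ ρ b q r s nQ nS * (N : ℝ) ^ 2
          + cMconst N τ ρ b q r s nQ nS * (N : ℝ) + 1) + lmin))

open Real

section Scalar

variable {ρ L C₁ C₂ : ℝ}

theorem exp_neg_mul_two_mul_add (ρ v : ℝ) (t : ℕ) :
    exp (-ρ * (2 * t + v)) = exp (-ρ * v) * exp (-(2 * ρ)) ^ t := by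
  rw [← exp_nat_mul, ← exp_add]
  ring_nf

theorem exp_neg_mul_two_mul_add_le (hρ : 0 ≤ ρ) (t : ℕ) {v : ℝ} (hv : 0 ≤ v) :
    exp (-ρ * (2 * t + v)) ≤ exp (-(2 * ρ)) ^ t := by
  rw [exp_neg_mul_two_mul_add]
  exact mul_le_of_le_one_left (by positivity) (exp_le_one_iff.2 (by nlinarith))

theorem min_exp_le_add (hρ : 0 ≤ ρ) (hL : 0 ≤ L) (hC₁ : 0 ≤ C₁) (hC₂ : 0 ≤ C₂) (v : ℝ) :
    min (C₁ * exp (-ρ * v)) (C₂ * exp (L * v)) ≤ C₁ + C₂ := by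
  rcases le_total 0 v with hv | hv
  · have : C₁ * exp (-ρ * v) ≤ C₁ := mul_le_of_le_one_right hC₁ (exp_le_one_iff.2 (by nlinarith))
    linarith [min_le_left (C₁ * exp (-ρ * v)) (C₂ * exp (L * v))]
  · have : C₂ * exp (L * v) ≤ C₂ := mul_le_of_le_one_right hC₂ (exp_le_one_iff.2 (by nlinarith))
    linarith [min_le_right (C₁ * exp (-ρ * v)) (C₂ * exp (L * v))]

theorem summable_min_exp (hρ : 0 < ρ) (hC₁ : 0 ≤ C₁) (hC₂ : 0 ≤ C₂) (L v : ℝ) :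
    Summable fun t : ℕ => min (C₁ * exp (-ρ * (2 * t + v))) (C₂ * exp (L * (2 * t + v))) := by
  refine .of_nonneg_of_le (fun t => by positivity) (fun t => min_le_left _ _) ?_
  simp_rw [exp_neg_mul_two_mul_add, ← mul_assoc]
  exact (summable_geometric_of_lt_one (exp_nonneg _) (exp_lt_one_iff.2 (by linarith))).mul_left _

/-- Split the sum where `2 t + v` changes sign; both halves are geometric. -/
theorem tsum_min_exp_le (hρ : 0 < ρ) (hL : 0 < L) (hC₁ : 0 ≤ C₁) (hC₂ : 0 ≤ C₂) (v : ℝ) :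
    ∑' t : ℕ, min (C₁ * exp (-ρ * (2 * t + v))) (C₂ * exp (L * (2 * t + v)))
      ≤ C₁ / (1 - exp (-(2 * ρ))) + C₂ / (1 - exp (-(2 * L))) := by
  set f : ℕ → ℝ := fun t => min (C₁ * exp (-ρ * (2 * t + v))) (C₂ * exp (L * (2 * t + v)))
  have hf : Summable f := summable_min_exp hρ hC₁ hC₂ L v
  set T := ⌈-v / 2⌉₊
  have hTv : 0 ≤ 2 * (T : ℝ) + v := by linarith [Nat.le_ceil (-v / 2)]
  have hgeom {κ : ℝ} (hκ : 0 < κ) :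
      HasSum (fun t : ℕ => exp (-(2 * κ)) ^ t) (1 - exp (-(2 * κ)))⁻¹ :=
    hasSum_geometric_of_lt_one (exp_nonneg _) (exp_lt_one_iff.2 (by linarith))
  have head : ∑ t ∈ Finset.range T, f t ≤ C₂ / (1 - exp (-(2 * L))) := by
    rw [← Finset.sum_range_reflect, div_eq_mul_inv, ← (hgeom hL).tsum_eq, ← tsum_mul_left]
    refine (Finset.sum_le_sum fun j hj => ?_).trans
      (((hgeom hL).summable.mul_left C₂).sum_le_tsum _ fun _ _ => by positivity)
    have hj : j < T := Finset.mem_range.1 hj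
    have hT : (T : ℝ) < -v / 2 + 1 := Nat.ceil_lt_add_one (Nat.ceil_pos.1 (by omega)).le
    have hcast : ((T - 1 - j : ℕ) : ℝ) = T - 1 - j := by
      rw [Nat.sub_sub, Nat.cast_sub (by omega)]; push_cast; ring
    have hexp : exp (L * (2 * ((T - 1 - j : ℕ) : ℝ) + v))
        = exp (-L * (2 * j + -(2 * (T - 1) + v))) := by
      rw [hcast]; ring_nf
    refine (min_le_right _ _).trans (mul_le_mul_of_nonneg_left ?_ hC₂)
    rw [hexp]
    exact exp_neg_mul_two_mul_add_le hL.le j (by linarith)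
  have tail : ∑' t, f (t + T) ≤ C₁ / (1 - exp (-(2 * ρ))) := by
    rw [div_eq_mul_inv, ← (hgeom hρ).tsum_eq, ← tsum_mul_left]
    refine ((summable_nat_add_iff T).2 hf).tsum_le_tsum (fun t => ?_)
      ((hgeom hρ).summable.mul_left C₁)
    refine (min_le_left _ _).trans (mul_le_mul_of_nonneg_left ?_ hC₁)
    rw [show (2 * ((t + T : ℕ) : ℝ) + v) = 2 * t + (2 * T + v) by push_cast; ring]
    exact exp_neg_mul_two_mul_add_le hρ.le t hTv
  rw [← hf.sum_add_tsum_nat_add T]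
  linarith

end Scalar

section Submatrix

variable {𝕜 : Type*} [RCLike 𝕜] {m n m' n' : Type*} [Fintype m] [Fintype n] [Fintype m']
  [Fintype n'] [DecidableEq m] [DecidableEq n] [DecidableEq m'] [DecidableEq n']

theorem l2_opNorm_one_le : ‖(1 : Matrix m m 𝕜)‖ ≤ 1 := by
  have h := l2_opNorm_conjTranspose_mul_self (1 : Matrix m m 𝕜)
  rw [conjTranspose_one, Matrix.one_mul] at h
  nlinarith [norm_nonneg (1 : Matrix m m 𝕜)]

theorem l2_opNorm_one_submatrix_le {r : m' → m} (hr : Function.Injective r) :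
    ‖(1 : Matrix m m 𝕜).submatrix id r‖ ≤ 1 := by
  have h := l2_opNorm_conjTranspose_mul_self ((1 : Matrix m m 𝕜).submatrix id r)
  rw [conjTranspose_submatrix, conjTranspose_one, ← submatrix_mul _ _ _ _ _ Function.bijective_id,
    Matrix.one_mul, submatrix_one _ hr] at h
  nlinarith [norm_nonneg ((1 : Matrix m m 𝕜).submatrix id r), l2_opNorm_one_le (𝕜 := 𝕜) (m := m')]

theorem l2_opNorm_submatrix_le (X : Matrix m n 𝕜) {r : m' → m} {c : n' → n}
    (hr : Function.Injective r) (hc : Function.Injective c) : ‖X.submatrix r c‖ ≤ ‖X‖ := by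
  set P := (1 : Matrix m m 𝕜).submatrix id r
  set P' := (1 : Matrix n n 𝕜).submatrix id c
  have hX : X.submatrix r c = Pᴴ * X * P' := by
    ext a b
    simp [P, P', Matrix.mul_apply, Matrix.one_apply]
  rw [hX]
  calc ‖Pᴴ * X * P'‖ ≤ ‖Pᴴ‖ * ‖X‖ * ‖P'‖ :=
        (l2_opNorm_mul _ _).trans (mul_le_mul_of_nonneg_right (l2_opNorm_mul _ _) (norm_nonneg _))
    _ ≤ 1 * ‖X‖ * 1 := by
        gcongr
        · rw [l2_opNorm_conjTranspose]; exact l2_opNorm_one_submatrix_le hr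
        · exact l2_opNorm_one_submatrix_le hc
    _ = ‖X‖ := by ring

theorem l2_opNorm_transpose (X : Matrix m n ℝ) : ‖Xᵀ‖ = ‖X‖ := by
  rw [← conjTranspose_eq_transpose_of_trivial, l2_opNorm_conjTranspose]

end Submatrix

section Blocks

variable {N : ℕ} {d e f : Fin N → ℕ}

theorem blk_add (X Y : Matrix (BIdx d) (BIdx e) ℝ) (i j : Fin N) :
    blk (X + Y) i j = blk X i j + blk Y i j := rfl

theorem blk_transpose (X : Matrix (BIdx d) (BIdx e) ℝ) (i j : Fin N) :
    blk Xᵀ i j = (blk X j i)ᵀ := rfl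

theorem blk_mul (X : Matrix (BIdx d) (BIdx e) ℝ) (Y : Matrix (BIdx e) (BIdx f) ℝ) (i j : Fin N) :
    blk (X * Y) i j = ∑ k, blk X i k * blk Y k j := by
  ext
  simp only [blk, Matrix.mul_apply, Matrix.of_apply, Matrix.sum_apply]
  rw [← Finset.univ_sigma_univ, Finset.sum_sigma]

theorem norm_blk_le (X : Matrix (BIdx d) (BIdx e) ℝ) (i j : Fin N) : ‖blk X i j‖ ≤ ‖X‖ :=
  l2_opNorm_submatrix_le X sigma_mk_injective sigma_mk_injective

theorem HasSum.blk {ι : Type*} {F : ι → Matrix (BIdx d) (BIdx e) ℝ} {X : Matrix (BIdx d) (BIdx e) ℝ}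
    (hF : HasSum F X) (i j : Fin N) : HasSum (fun t => blk (F t) i j) (blk X i j) :=
  Pi.hasSum.2 fun _ => Pi.hasSum.2 fun _ => Pi.hasSum.1 (Pi.hasSum.1 hF _) _

end Blocks

namespace IsSED

variable {N : ℕ} {d e f : Fin N → ℕ} {dist : Fin N → Fin N → ℝ} {c c₁ c₂ γ : ℝ}
  {X Y : Matrix (BIdx d) (BIdx e) ℝ}

theorem mono_const (hX : IsSED dist c γ X) {c' : ℝ} (hc : c ≤ c') : IsSED dist c' γ X :=
  fun i j => (hX i j).trans (mul_le_mul_of_nonneg_right hc (exp_pos _).le)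

theorem mono_rate (hdist : IsDist dist) (hc : 0 ≤ c) (hX : IsSED dist c γ X) {γ' : ℝ}
    (hγ : γ' ≤ γ) : IsSED dist c γ' X := fun i j =>
  (hX i j).trans <| mul_le_mul_of_nonneg_left
    (exp_le_exp.2 (by nlinarith [hdist.nonneg i j])) hc

theorem add (hX : IsSED dist c₁ γ X) (hY : IsSED dist c₂ γ Y) :
    IsSED dist (c₁ + c₂) γ (X + Y) := fun i j => by
  rw [blk_add, add_mul]
  exact (norm_add_le _ _).trans (add_le_add (hX i j) (hY i j))

theorem transpose (hdist : IsDist dist) (hX : IsSED dist c γ X) : IsSED dist c γ Xᵀ :=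
  fun i j => by
  rw [blk_transpose, l2_opNorm_transpose, hdist.symm]
  exact hX j i

theorem mul {Y : Matrix (BIdx e) (BIdx f) ℝ} (hdist : IsDist dist) (hγ : 0 ≤ γ) (hc₁ : 0 ≤ c₁)
    (hc₂ : 0 ≤ c₂) (hX : IsSED dist c₁ γ X) (hY : IsSED dist c₂ γ Y) :
    IsSED dist (c₁ * c₂ * N) γ (X * Y) := fun i j => by
  rw [blk_mul]
  calc ‖∑ k, blk X i k * blk Y k j‖ ≤ ∑ k, ‖blk X i k‖ * ‖blk Y k j‖ :=
        (norm_sum_le _ _).trans (Finset.sum_le_sum fun k _ => l2_opNorm_mul _ _)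
    _ ≤ ∑ _k : Fin N, c₁ * c₂ * exp (-γ * dist i j) := by
        refine Finset.sum_le_sum fun k _ => ?_
        calc ‖blk X i k‖ * ‖blk Y k j‖
            ≤ c₁ * exp (-γ * dist i k) * (c₂ * exp (-γ * dist k j)) :=
              mul_le_mul (hX i k) (hY k j) (norm_nonneg _) (by positivity)
          _ = c₁ * c₂ * exp (-γ * (dist i k + dist k j)) := by
              rw [mul_add, exp_add]; ring
          _ ≤ c₁ * c₂ * exp (-γ * dist i j) := mul_le_mul_of_nonneg_left
              (exp_le_exp.2 (by nlinarith [hdist.triangle i j k])) (by positivity)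
    _ = c₁ * c₂ * N * exp (-γ * dist i j) := by simp; ring

theorem mul_pow {A : Matrix (BIdx e) (BIdx e) ℝ} {a : ℝ} (hdist : IsDist dist) (hγ : 0 ≤ γ)
    (hc : 0 ≤ c) (ha : 0 ≤ a) (hX : IsSED dist c γ X) (hA : IsSED dist a γ A) (t : ℕ) :
    IsSED dist (c * (a * N) ^ t) γ (X * A ^ t) := by
  induction t with
  | zero => simpa using hX
  | succ t ih =>
    rw [pow_succ A, ← Matrix.mul_assoc]
    exact (ih.mul hdist hγ (by positivity) ha hA).mono_const (le_of_eq (by ring))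

end IsSED

section Gramian

variable {ι : Type*} [Fintype ι] [DecidableEq ι] {A Q : Matrix ι ι ℝ} {τ ρ : ℝ}

theorem Gmat_transpose (hQ : Q.IsSymm) : (Gmat A Q)ᵀ = Gmat A Q := by
  rw [Gmat, Matrix.transpose_tsum]
  simp only [Matrix.transpose_mul, Matrix.transpose_transpose, hQ.eq, Matrix.mul_assoc]

theorem IsExpStable.norm_transpose_mul_mul_pow_le (hA : IsExpStable τ ρ A) (hτ : 0 ≤ τ)
    (Q : Matrix ι ι ℝ) (t n : ℕ) :
    ‖(A ^ t)ᵀ * Q * A ^ (t + n)‖ ≤ τ ^ 2 * ‖Q‖ * exp (-ρ * (2 * t + n)) := by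
  calc ‖(A ^ t)ᵀ * Q * A ^ (t + n)‖ ≤ ‖A ^ t‖ * ‖Q‖ * ‖A ^ (t + n)‖ := by
        refine (l2_opNorm_mul _ _).trans (mul_le_mul_of_nonneg_right ?_ (norm_nonneg _))
        exact (l2_opNorm_mul _ _).trans_eq (by rw [l2_opNorm_transpose])
    _ ≤ τ * exp (-ρ * t) * ‖Q‖ * (τ * exp (-ρ * ↑(t + n))) := by
        gcongr
        · exact hA t
        · exact hA (t + n)
    _ = τ ^ 2 * ‖Q‖ * (exp (-ρ * t) * exp (-ρ * ↑(t + n))) := by ring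
    _ = τ ^ 2 * ‖Q‖ * exp (-ρ * (2 * t + n)) := by
        rw [← exp_add]; push_cast; ring_nf

theorem IsExpStable.hasSum_Gmat_mul_pow (hA : IsExpStable τ ρ A) (hτ : 0 ≤ τ) (hρ : 0 < ρ)
    (Q : Matrix ι ι ℝ) (n : ℕ) :
    HasSum (fun t : ℕ => (A ^ t)ᵀ * Q * A ^ (t + n)) (Gmat A Q * A ^ n) := by
  have hsum (n : ℕ) : Summable fun t : ℕ => (A ^ t)ᵀ * Q * A ^ (t + n) := by
    refine .of_norm_bounded ?_ (hA.norm_transpose_mul_mul_pow_le hτ Q · n)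
    simp_rw [exp_neg_mul_two_mul_add, ← mul_assoc]
    exact (summable_geometric_of_lt_one (exp_nonneg _)
      (exp_lt_one_iff.2 (by linarith))).mul_left _
  have hsum₀ : Summable fun t : ℕ => (A ^ t)ᵀ * Q * A ^ t := by simpa using hsum 0
  rw [Gmat, ← hsum₀.tsum_mul_right]
  simpa only [add_zero, Matrix.mul_assoc, ← pow_add] using (hsum n).hasSum

end Gramian

/-- The two exponentials cross at `u = γ D / (ρ + L)`, where both equal `e^{-γ ρ D / (ρ + L)}`. -/
theorem min_exp_eq_mul_exp {ρ L : ℝ} (hρL : ρ + L ≠ 0) (C₁ C₂ γ D u : ℝ) :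
    min (C₁ * exp (-ρ * u)) (C₂ * exp (L * u) * exp (-γ * D))
      = min (C₁ * exp (-ρ * (u - γ * D / (ρ + L))))
          (C₂ * exp (L * (u - γ * D / (ρ + L)))) * exp (-(γ * ρ / (ρ + L)) * D) := by
  rw [min_mul_of_nonneg _ _ (exp_pos _).le, mul_assoc, mul_assoc, mul_assoc, ← exp_add,
    ← exp_add, ← exp_add]
  congr 3 <;> field_simp <;> ring

theorem pow_eq_exp_log_mul {x : ℝ} (hx : 0 < x) (m : ℕ) : x ^ m = exp (log x * m) := by
  rw [← rpow_natCast, rpow_def_of_pos hx]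

section Decay

variable {N : ℕ} {d e : Fin N → ℕ} {dist : Fin N → Fin N → ℝ} {A : Matrix (BIdx d) (BIdx d) ℝ}
  {a γ τ ρ : ℝ}

theorem IsSED.mul_pow_of_isExpStable {S : Matrix (BIdx e) (BIdx d) ℝ} {s : ℝ}
    (hS : IsSED dist s γ S) (hdist : IsDist dist) (hγ : 0 ≤ γ) (hs : 0 ≤ s)
    (hA : IsSED dist a γ A) (haN : 1 ≤ a * N) (hAst : IsExpStable τ ρ A) (hτ : 0 ≤ τ)
    (hρ : 0 < ρ) (n : ℕ) :
    IsSED dist (τ * ‖S‖ + s) (γ * ρ / (ρ + log (a * N))) (S * A ^ n) := fun i j => by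
  have ha : 0 ≤ a := (pos_of_mul_pos_left (by linarith) N.cast_nonneg).le
  have hL : 0 ≤ log (a * N) := log_nonneg haN
  have htime : ‖blk (S * A ^ n) i j‖ ≤ τ * ‖S‖ * exp (-ρ * n) :=
    calc ‖blk (S * A ^ n) i j‖ ≤ ‖S‖ * ‖A ^ n‖ := (norm_blk_le _ i j).trans (l2_opNorm_mul _ _)
      _ ≤ ‖S‖ * (τ * exp (-ρ * n)) := by gcongr; exact hAst n
      _ = τ * ‖S‖ * exp (-ρ * n) := by ring
  have hspace := hS.mul_pow hdist hγ hs ha hA n i j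
  rw [pow_eq_exp_log_mul (by linarith)] at hspace
  calc ‖blk (S * A ^ n) i j‖
      ≤ min (τ * ‖S‖ * exp (-ρ * n))
          (s * exp (log (a * N) * n) * exp (-γ * dist i j)) := le_min htime hspace
    _ ≤ (τ * ‖S‖ + s) * exp (-(γ * ρ / (ρ + log (a * N))) * dist i j) := by
        rw [min_exp_eq_mul_exp (by linarith)]
        gcongr
        exact min_exp_le_add hρ.le hL (by positivity) hs _

theorem isSED_Gmat_mul_pow {Q : Matrix (BIdx d) (BIdx d) ℝ} {q : ℝ} (hdist : IsDist dist)
    (hγ : 0 ≤ γ) (haN : 2 ≤ a * N) (hq : 0 ≤ q) (hτ : 0 ≤ τ) (hρ : 0 < ρ)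
    (hA : IsSED dist a γ A) (hQ : IsSED dist q γ Q) (hAst : IsExpStable τ ρ A) (n : ℕ) :
    IsSED dist (τ ^ 2 * ‖Q‖ / (1 - exp (-(2 * ρ))) + 2 * q)
      (γ * ρ / (ρ + log (a * N))) (Gmat A Q * A ^ n) := fun i j => by
  have ha : 0 ≤ a := (pos_of_mul_pos_left (by linarith) N.cast_nonneg).le
  set L := log (a * N)
  have hL : log 2 ≤ L := log_le_log two_pos haN
  have hL₀ : 0 < L := (log_pos one_lt_two).trans_le hL
  set E := exp (-(γ * ρ / (ρ + L)) * dist i j)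
  set v := (n : ℝ) - γ * dist i j / (ρ + L)
  set g : ℕ → ℝ := fun t =>
    min (τ ^ 2 * ‖Q‖ * exp (-ρ * (2 * t + v))) (q * exp (L * (2 * t + v)))
  have hg : Summable g := summable_min_exp hρ (by positivity) hq L v
  have hterm (t : ℕ) : ‖blk ((A ^ t)ᵀ * Q * A ^ (t + n)) i j‖ ≤ g t * E := by
    have hQA : IsSED dist (q * (a * N) ^ t) γ ((A ^ t)ᵀ * Q) := by
      simpa using ((hQ.transpose hdist).mul_pow hdist hγ hq ha hA t).transpose hdist
    have hspace := hQA.mul_pow hdist hγ (by positivity) ha hA (t + n) i j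
    rw [mul_assoc q, ← pow_add, pow_eq_exp_log_mul (by linarith)] at hspace
    refine (le_min ((norm_blk_le _ i j).trans (hAst.norm_transpose_mul_mul_pow_le hτ Q t n))
      (hspace.trans_eq (by rw [show ((t + (t + n) : ℕ) : ℝ) = 2 * t + n by push_cast; ring] :
        _ = q * exp (L * (2 * t + n)) * exp (-γ * dist i j)))).trans_eq ?_
    rw [min_exp_eq_mul_exp (by linarith)]
    simp only [g, v, E, add_sub_assoc]
  have hE : exp (-(2 * L)) ≤ 1 / 2 :=
    calc exp (-(2 * L)) ≤ exp (-log 2) := exp_le_exp.2 (by linarith)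
      _ = 1 / 2 := by rw [exp_neg, exp_log two_pos, one_div]
  calc ‖blk (Gmat A Q * A ^ n) i j‖ ≤ ∑' t, g t * E :=
        ((hAst.hasSum_Gmat_mul_pow hτ hρ Q n).blk i j).norm_le_of_bounded
          (hg.mul_right E).hasSum hterm
    _ = (∑' t, g t) * E := tsum_mul_right
    _ ≤ (τ ^ 2 * ‖Q‖ / (1 - exp (-(2 * ρ))) + q / (1 - exp (-(2 * L)))) * E := by
        gcongr
        exact tsum_min_exp_le hρ hL₀ (by positivity) hq v
    _ ≤ (τ ^ 2 * ‖Q‖ / (1 - exp (-(2 * ρ))) + 2 * q) * E := by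
        gcongr
        rw [div_le_iff₀ (by linarith)]
        nlinarith

end Decay

theorem Mblk_transpose_of_lt {ιx ιu : Type*} [Fintype ιx] [DecidableEq ιx] [Fintype ιu]
    [DecidableEq ιu] {A Q : Matrix ιx ιx ℝ} {B : Matrix ιx ιu ℝ} {R : Matrix ιu ιu ℝ}
    {S : Matrix ιu ιx ℝ} (hQ : Q.IsSymm) {k m : ℕ} (h : m < k) :
    (Mblk A B Q R S k m)ᵀ = Mblk A B Q R S m k := by
  rw [Mblk, Mblk, if_neg h.ne', if_pos h, if_neg h.ne, if_neg (not_lt.2 h.le)]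
  simp only [transpose_add, transpose_mul, transpose_transpose, Gmat_transpose hQ,
    Matrix.mul_assoc]

section HorizonBlocks

variable {N : ℕ} {nx nu : Fin N → ℕ} {dist : Fin N → Fin N → ℝ} {A Q : Matrix (BIdx nx) (BIdx nx) ℝ}
  {B : Matrix (BIdx nx) (BIdx nu) ℝ} {S : Matrix (BIdx nu) (BIdx nx) ℝ} {b cG cS γ : ℝ}

theorem isSED_Jblk (hdist : IsDist dist) (hγ : 0 ≤ γ) (hb : 0 ≤ b) (hcG : 0 ≤ cG)
    (hB : IsSED dist b γ B) (hG : ∀ n, IsSED dist cG γ (Gmat A Q * A ^ n))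
    (hSA : ∀ n, IsSED dist cS γ (S * A ^ n)) (k : ℕ) :
    IsSED dist (b * cG * N + cS) γ (Jblk A B Q S k) := by
  rw [Jblk, Matrix.mul_assoc]
  exact ((hB.transpose hdist).mul hdist hγ hb hcG (hG k)).add (hSA (k - 1))

theorem isSED_Mblk_of_le {R : Matrix (BIdx nu) (BIdx nu) ℝ} {r : ℝ} (hdist : IsDist dist)
    (hγ : 0 ≤ γ) (hb : 0 ≤ b) (hcG : 0 ≤ cG) (hcS : 0 ≤ cS) (hr : 0 ≤ r)
    (hB : IsSED dist b γ B) (hR : IsSED dist r γ R) (hG : ∀ n, IsSED dist cG γ (Gmat A Q * A ^ n))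
    (hSA : ∀ n, IsSED dist cS γ (S * A ^ n)) {k m : ℕ} (h : m ≤ k) :
    IsSED dist (b ^ 2 * N ^ 2 * cG + b * N * cS + r) γ (Mblk A B Q R S k m) := by
  have hBGB (n : ℕ) : IsSED dist (b * cG * N * b * N) γ (Bᵀ * (Gmat A Q * A ^ n) * B) :=
    ((hB.transpose hdist).mul hdist hγ hb hcG (hG n)).mul hdist hγ (by positivity) hb hB
  have hc : b * cG * N * b * N = b ^ 2 * N ^ 2 * cG := by ring
  have hbcS : 0 ≤ b * N * cS := by positivity
  rcases h.eq_or_lt with rfl | h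
  · rw [Mblk, if_pos rfl]
    have hGR : IsSED dist (b * cG * N * b * N + r) γ (Bᵀ * Gmat A Q * B + R) := by
      simpa using (hBGB 0).add hR
    exact hGR.mono_const (by rw [hc]; linarith)
  · rw [Mblk, if_neg h.ne', if_pos h, Matrix.mul_assoc Bᵀ]
    exact ((hBGB _).add ((hSA _).mul hdist hγ hcS hb hB)).mono_const
      (by rw [hc, show cS * b * N = b * N * cS by ring]; linarith)

end HorizonBlocks

theorem Mblk_Jblk_SED_general
    {N : ℕ} (hN : 2 ≤ N) {nxd nud : Fin N → ℕ}
    (dist : Fin N → Fin N → ℝ) (hdist : IsDist dist)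
    (A : Matrix (BIdx nxd) (BIdx nxd) ℝ) (B : Matrix (BIdx nxd) (BIdx nud) ℝ)
    (Q : Matrix (BIdx nxd) (BIdx nxd) ℝ) (R : Matrix (BIdx nud) (BIdx nud) ℝ)
    (S : Matrix (BIdx nud) (BIdx nxd) ℝ)
    (hQsym : Q.IsSymm)
    (γ a b q r s : ℝ) (hγ : 0 < γ)
    (ha : 1 ≤ a) (hb : 1 ≤ b) (hq : 1 ≤ q) (hr : 1 ≤ r) (hs : 0 < s)
    (hA : IsSED dist a γ A) (hB : IsSED dist b γ B) (hQ : IsSED dist q γ Q)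
    (hR : IsSED dist r γ R) (hS : IsSED dist s γ S)
    (τ ρ : ℝ) (hτ : 1 ≤ τ) (hρ : 0 < ρ)
    (hAst : IsExpStable τ ρ A) :
    ∀ k m : ℕ, 1 ≤ k → 1 ≤ m →
      IsSED dist (cMconst N τ ρ b q r s ‖Q‖ ‖S‖) (γ * ρ / (ρ + Real.log (a * (N : ℝ))))
        (Mblk A B Q R S k m) ∧
      IsSED dist (cJconst N τ ρ b q s ‖Q‖ ‖S‖) (γ * ρ / (ρ + Real.log (a * (N : ℝ))))
        (Jblk A B Q S k) := by
  intro k m _ _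
  have haN : 2 ≤ a * N := by nlinarith [show (2 : ℝ) ≤ N by exact_mod_cast hN]
  have hL : 0 < log (a * N) := log_pos (by linarith)
  have hγ'₀ : 0 ≤ γ * ρ / (ρ + log (a * N)) := by positivity
  have hγ' : γ * ρ / (ρ + log (a * N)) ≤ γ := by
    rw [div_le_iff₀ (by positivity)]; nlinarith
  have hcG : 0 ≤ τ ^ 2 * ‖Q‖ / (1 - exp (-(2 * ρ))) + 2 * q := by
    have : exp (-(2 * ρ)) < 1 := exp_lt_one_iff.2 (by linarith)
    have : 0 < 1 - exp (-(2 * ρ)) := by linarith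
    positivity
  have hG := isSED_Gmat_mul_pow hdist hγ.le haN (by linarith) (by linarith) hρ hA hQ hAst
  have hSA := hS.mul_pow_of_isExpStable hdist hγ.le hs.le hA (by linarith) hAst (by linarith) hρ
  have hB' := hB.mono_rate hdist (by linarith) hγ'
  have hM {k m : ℕ} (h : m ≤ k) :=
    (isSED_Mblk_of_le hdist hγ'₀ (by linarith) hcG (by positivity) (by linarith) hB'
      (hR.mono_rate hdist (by linarith) hγ') hG hSA h).mono_const
      (le_of_eq (by unfold cMconst; ring) : _ ≤ cMconst N τ ρ b q r s ‖Q‖ ‖S‖)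
  refine ⟨?_, (isSED_Jblk hdist hγ'₀ (by linarith) hcG hB' hG hSA k).mono_const
    (le_of_eq (by unfold cJconst; ring))⟩
  rcases le_or_gt m k with h | h
  · exact hM h
  · rw [← Mblk_transpose_of_lt hQsym h]
    exact (hM h.le).transpose hdist

/-- Lemma: SED structure of the blocks `M_{km}` and `J_k`. -/
theorem Mblk_Jblk_SED
    {N : ℕ} (hN : 2 ≤ N) {nxd nud : Fin N → ℕ}
    (hnx : ∀ i, 1 ≤ nxd i) (hnu : ∀ i, 1 ≤ nud i)
    (dist : Fin N → Fin N → ℝ) (hdist : IsDist dist)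
    (A : Matrix (BIdx nxd) (BIdx nxd) ℝ) (B : Matrix (BIdx nxd) (BIdx nud) ℝ)
    (Q : Matrix (BIdx nxd) (BIdx nxd) ℝ) (R : Matrix (BIdx nud) (BIdx nud) ℝ)
    (S : Matrix (BIdx nud) (BIdx nxd) ℝ)
    (hQsym : Q.IsSymm) (hRsym : R.IsSymm)
    (γ a b q r s : ℝ) (hγ : 0 < γ)
    (ha : 1 ≤ a) (hb : 1 ≤ b) (hq : 1 ≤ q) (hr : 1 ≤ r) (hs : 0 < s)
    (hA : IsSED dist a γ A) (hB : IsSED dist b γ B) (hQ : IsSED dist q γ Q)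
    (hR : IsSED dist r γ R) (hS : IsSED dist s γ S)
    (τ ρ : ℝ) (hτ : 1 ≤ τ) (hρ : 0 < ρ)
    (hAst : IsExpStable τ ρ A) :
    ∀ k m : ℕ, 1 ≤ k → 1 ≤ m →
      IsSED dist (cMconst N τ ρ b q r s ‖Q‖ ‖S‖) (γ * ρ / (ρ + Real.log (a * (N : ℝ))))
        (Mblk A B Q R S k m) ∧
      IsSED dist (cJconst N τ ρ b q s ‖Q‖ ‖S‖) (γ * ρ / (ρ + Real.log (a * (N : ℝ))))
        (Jblk A B Q S k) :=
  Mblk_Jblk_SED_general hN dist hdist A B Q R S hQsym γ a b q r s hγ ha hb hq hr hs hA hB hQ hR hS τ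
    ρ hτ hρ hAst
end
end

section
/- Let N ≥ 1, c ≥ 1, A = c·I ∈ ℝ^{N×N}, and let B ∈ ℝ^{N×N} be the upper bidiagonal matrix with B_{ii} = 1 for all i, B_{i,i+1} = 1 for 1 ≤ i ≤ N−1, and all other entries 0. Then for every τ ≥ 1 and ρ > 0, every K₀ ∈ ℝ^{N×N} such that A − BK₀ is (τ,e^{−ρ})-stable satisfies ‖K₀‖ ≥ (1−e^{−ρ})·√N/τ; in particular there is no K₀ with ‖K₀‖ < (1−e^{−ρ})·√N/τ making A − BK₀ (τ,e^{−ρ})-stable. -/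
open scoped Matrix.Norms.L2Operator
open Matrix

noncomputable section

/-!
Put `M = c • 1 - B * K₀`. Stability gives `‖M ^ k‖ ≤ τ e^{-ρ k}` with `e^{-ρ} < c`, so the Neumann
series `∑ M ^ k / c ^ (k + 1)` inverts `c • 1 - M = B * K₀`, with norm at most `τ / (c - e^{-ρ})`.
Hence `K₀` times this inverse is `B⁻¹`. On the other hand `B` maps the alternating sign vector,
of norm `√N`, to a unit vector, so `√N ≤ ‖B⁻¹‖ ≤ ‖K₀‖ τ / (c - e^{-ρ})`, and `c ≥ 1` finishes.
-/

def upperBidiagOnes (N : ℕ) : Matrix (Fin N) (Fin N) ℝ :=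
  Matrix.of fun i j => if i = j ∨ (i : ℕ) + 1 = (j : ℕ) then 1 else 0

theorem upperBidiagOnes_mulVec_alternating (n : ℕ) :
    upperBidiagOnes (n + 1) *ᵥ (fun j => (-1 : ℝ) ^ (n - j)) = Pi.single (Fin.last n) 1 := by
  ext i
  have hsum := Fin.sum_univ_eq_sum_range
    (fun j => (if (i : ℕ) = j ∨ (i : ℕ) + 1 = j then (1 : ℝ) else 0) * (-1) ^ (n - j)) (n + 1)
  simp only [mulVec, dotProduct, upperBidiagOnes, of_apply, Fin.ext_iff, hsum]
  rcases Fin.eq_castSucc_or_eq_last i with ⟨i, rfl⟩ | rfl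
  · have : n - i = n - (i + 1) + 1 := by omega
    simp [ite_or, Finset.sum_ite, Finset.filter_eq, (Fin.castSucc_lt_last i).ne, this, pow_succ]
  · simp [ite_or, Finset.sum_ite, Finset.filter_eq]

theorem sqrt_le_norm_of_mul_upperBidiagOnes_eq_one {N : ℕ} {S : Matrix (Fin N) (Fin N) ℝ}
    (hS : S * upperBidiagOnes N = 1) : √(N : ℝ) ≤ ‖S‖ := by
  cases N with
  | zero => simp
  | succ n =>
    let u : EuclideanSpace ℝ (Fin (n + 1)) := WithLp.toLp 2 fun j => (-1 : ℝ) ^ (n - j)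
    have hSe : S *ᵥ Pi.single (Fin.last n) 1 = u.ofLp := by
      rw [← upperBidiagOnes_mulVec_alternating, mulVec_mulVec, hS, one_mulVec]
    have hu : ‖u‖ = √((n + 1 : ℕ) : ℝ) := by simp [EuclideanSpace.norm_eq, u]
    simpa [hSe, hu] using S.l2_opNorm_mulVec (EuclideanSpace.single (Fin.last n) 1)

section NeumannSeries

variable {R : Type*} [NormedRing R]

theorem norm_tsum_pow_le_of_norm_pow_le {a : R} {τ r : ℝ} (hr₀ : 0 ≤ r) (hr₁ : r < 1)
    (h : ∀ k : ℕ, ‖a ^ k‖ ≤ τ * r ^ k) : ‖∑' k : ℕ, a ^ k‖ ≤ τ / (1 - r) :=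
  tsum_of_norm_bounded ((hasSum_geometric_of_lt_one hr₀ hr₁).mul_left τ) h

variable [CompleteSpace R]

theorem summable_pow_of_norm_pow_le {a : R} {τ r : ℝ} (hr₀ : 0 ≤ r) (hr₁ : r < 1)
    (h : ∀ k : ℕ, ‖a ^ k‖ ≤ τ * r ^ k) : Summable (a ^ ·) :=
  .of_norm_bounded ((summable_geometric_of_lt_one hr₀ hr₁).mul_left τ) h

variable [NormedAlgebra ℝ R]

theorem exists_mul_eq_one_norm_le_of_norm_pow_le {M : R} {τ r c : ℝ} (hr₀ : 0 ≤ r)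
    (hrc : r < c) (h : ∀ k : ℕ, ‖M ^ k‖ ≤ τ * r ^ k) :
    ∃ b : R, (c • 1 - M) * b = 1 ∧ ‖b‖ ≤ τ / (c - r) := by
  have hc : 0 < c := hr₀.trans_lt hrc
  set X := c⁻¹ • M
  have hX : ∀ k : ℕ, ‖X ^ k‖ ≤ τ * (r / c) ^ k := fun k => by
    calc ‖X ^ k‖ = (c⁻¹) ^ k * ‖M ^ k‖ := by
          rw [smul_pow, norm_smul, norm_pow, Real.norm_of_nonneg (inv_nonneg.2 hc.le)]
      _ ≤ (c⁻¹) ^ k * (τ * r ^ k) := by gcongr; exact h k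
      _ = τ * (r / c) ^ k := by rw [div_pow, div_eq_inv_mul, ← inv_pow]; ring
  have hr₀' : 0 ≤ r / c := div_nonneg hr₀ hc.le
  have hr₁' : r / c < 1 := (div_lt_one hc).2 hrc
  refine ⟨c⁻¹ • ∑' k : ℕ, X ^ k, ?_, ?_⟩
  · have hcX : c • (1 : R) - M = c • (1 - X) := by
      rw [smul_sub, smul_smul, mul_inv_cancel₀ hc.ne', one_smul]
    rw [hcX, smul_mul_smul_comm, mul_inv_cancel₀ hc.ne', one_smul,
      (summable_pow_of_norm_pow_le hr₀' hr₁' hX).one_sub_mul_tsum_pow]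
  · calc ‖c⁻¹ • ∑' k : ℕ, X ^ k‖ = c⁻¹ * ‖∑' k : ℕ, X ^ k‖ := by
          rw [norm_smul, Real.norm_of_nonneg (inv_nonneg.2 hc.le)]
      _ ≤ c⁻¹ * (τ / (1 - r / c)) := by
          gcongr; exact norm_tsum_pow_le_of_norm_pow_le hr₀' hr₁' hX
      _ = τ / (c - r) := by field_simp

end NeumannSeries

theorem IsExpStable.norm_pow_le {n : Type*} [Fintype n] [DecidableEq n] {τ ρ : ℝ}
    {A : Matrix n n ℝ} (h : IsExpStable τ ρ A) (k : ℕ) : ‖A ^ k‖ ≤ τ * Real.exp (-ρ) ^ k := by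
  rw [← Real.exp_nat_mul, mul_comm (k : ℝ)]
  exact h k

theorem counterexample_no_small_stabilizer_general
    {N : ℕ} (c : ℝ) (hc : 1 ≤ c)
    (B : Matrix (Fin N) (Fin N) ℝ)
    (hB : B = Matrix.of fun i j : Fin N => if i = j ∨ (i : ℕ) + 1 = (j : ℕ) then (1 : ℝ) else 0)
    (τ ρ : ℝ) (hτ : 1 ≤ τ) (hρ : 0 < ρ)
    (K₀ : Matrix (Fin N) (Fin N) ℝ)
    (hstab : IsExpStable τ ρ (c • (1 : Matrix (Fin N) (Fin N) ℝ) - B * K₀)) :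
    (1 - Real.exp (-ρ)) * Real.sqrt (N : ℝ) / τ ≤ ‖K₀‖ := by
  subst hB
  have hexp : Real.exp (-ρ) < 1 := Real.exp_lt_one_iff.2 (neg_lt_zero.2 hρ)
  obtain ⟨b, hb, hb_norm⟩ := exists_mul_eq_one_norm_le_of_norm_pow_le (Real.exp_nonneg _)
    (hexp.trans_le hc) hstab.norm_pow_le
  rw [sub_sub_cancel, mul_assoc] at hb
  have hsqrt : √(N : ℝ) ≤ ‖K₀ * b‖ :=
    sqrt_le_norm_of_mul_upperBidiagOnes_eq_one (mul_eq_one_comm.1 hb)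
  have hce : 0 < c - Real.exp (-ρ) := by linarith
  rw [div_le_iff₀ (by linarith)]
  calc (1 - Real.exp (-ρ)) * √(N : ℝ) ≤ (c - Real.exp (-ρ)) * ‖K₀ * b‖ := by gcongr
    _ ≤ (c - Real.exp (-ρ)) * (‖K₀‖ * (τ / (c - Real.exp (-ρ)))) := by
        gcongr; exact (norm_mul_le _ _).trans (by gcongr)
    _ = ‖K₀‖ * τ := by field_simp

/-- Lemma: the counter-example admits no small-norm stabilizing gain. -/
theorem counterexample_no_small_stabilizer
    {N : ℕ} (hN : 1 ≤ N) (c : ℝ) (hc : 1 ≤ c)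
    (B : Matrix (Fin N) (Fin N) ℝ)
    (hB : B = Matrix.of fun i j : Fin N => if i = j ∨ (i : ℕ) + 1 = (j : ℕ) then (1 : ℝ) else 0)
    (τ ρ : ℝ) (hτ : 1 ≤ τ) (hρ : 0 < ρ)
    (K₀ : Matrix (Fin N) (Fin N) ℝ)
    (hstab : IsExpStable τ ρ (c • (1 : Matrix (Fin N) (Fin N) ℝ) - B * K₀)) :
    (1 - Real.exp (-ρ)) * Real.sqrt (N : ℝ) / τ ≤ ‖K₀‖ :=
  counterexample_no_small_stabilizer_general c hc B hB τ ρ hτ hρ K₀ hstab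
end
end

section
/- Suppose A ∈ ℝ^{n_x×n_x} is (τ,e^{−ρ})-stable and Q ∈ ℝ^{n_x×n_x}. For an integer H ≥ 0, let Λ^(H+1) be the (H+1)×(H+1) block matrix with blocks Λ_{km} ∈ ℝ^{n_x×n_x} given by Λ_{km} = G·A^{k−m} for k ≥ m and Λ_{km} = (A^{m−k})ᵀ·G for k < m, where G := Σ_{t=0}^∞ (A^t)ᵀQA^t. For each integer t ≥ 1 define the block row A_t^(H+1) ∈ ℝ^{n_x×(H+1)n_x}: for 1 ≤ t ≤ H, A_t^(H+1) = [A^{t−1}, A^{t−2}, …, A, I, 0, …, 0] (first t blocks equal A^{t−1},…,A⁰ = I, remaining blocks zero); for t ≥ H+1, A_t^(H+1) = [A^{t−1}, A^{t−2}, …, A^{t−H−1}]. Then Λ^(H+1) = Σ_{t=1}^∞ (A_t^(H+1))ᵀ Q A_t^(H+1), the series converging since A is (τ,e^{−ρ})-stable. -/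
open scoped Matrix.Norms.L2Operator
open Matrix

noncomputable section

/-- The block row `A_t^{(H+1)}` (1-indexed `t ≥ 1`). -/
def Arow {nx : ℕ} (H : ℕ) (A : Matrix (Fin nx) (Fin nx) ℝ) (t : ℕ) :
    Matrix (Fin nx) (Fin (H + 1) × Fin nx) ℝ :=
  Matrix.of fun a p =>
    (if (p.1 : ℕ) + 1 ≤ t then A ^ (t - 1 - (p.1 : ℕ)) else 0) a p.2

/-- The block matrix `Λ^{(H+1)}` with blocks `Λ_{km} = G A^{k-m}` (`k ≥ m`) and
`Λ_{km} = (A^{m-k})ᵀ G` (`k < m`). -/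
def LamH {nx : ℕ} (H : ℕ) (A Q : Matrix (Fin nx) (Fin nx) ℝ) :
    Matrix (Fin (H + 1) × Fin nx) (Fin (H + 1) × Fin nx) ℝ :=
  Matrix.of fun p q =>
    (if (q.1 : ℕ) ≤ (p.1 : ℕ) then Gmat A Q * A ^ ((p.1 : ℕ) - (q.1 : ℕ))
     else (A ^ ((q.1 : ℕ) - (p.1 : ℕ)))ᵀ * Gmat A Q) p.2 q.2

/-!
Blockwise, the `(k, m)` block of the `t`-th term is `(A ^ (t - k))ᵀ * Q * A ^ (t - m)` when
`k, m ≤ t` and `0` otherwise. Reindexing `t = s + max k m` turns the series of that block into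
`∑ s, (A ^ s)ᵀ * Q * A ^ s = G` multiplied by `A ^ (k - m)` on the right or by `(A ^ (m - k))ᵀ`
on the left, which is the `(k, m)` block of `Λ`. Exponential stability bounds
`‖(A ^ s)ᵀ * Q * A ^ s‖` by a geometric sequence, so all these series converge.
-/

namespace Matrix

variable {n : Type*} [Fintype n] [DecidableEq n]

lemma IsExpStable.summable_transpose_pow_mul_mul_pow {τ ρ : ℝ} {A : Matrix n n ℝ}
    (hA : IsExpStable τ ρ A) (hρ : 0 < ρ) (Q : Matrix n n ℝ) :
    Summable fun s : ℕ => (A ^ s)ᵀ * Q * A ^ s := by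
  have hr : Real.exp (-(2 * ρ)) < 1 := Real.exp_lt_one_iff.mpr (by linarith)
  refine Summable.of_norm_bounded
    ((summable_geometric_of_lt_one (Real.exp_pos _).le hr).mul_left (τ ^ 2 * ‖Q‖)) fun s => ?_
  have hpow : ‖A ^ s‖ ^ 2 ≤ τ ^ 2 * Real.exp (-(2 * ρ)) ^ s := by
    calc ‖A ^ s‖ ^ 2 ≤ (τ * Real.exp (-ρ * s)) ^ 2 := pow_le_pow_left₀ (norm_nonneg _) (hA s) 2
      _ = τ ^ 2 * Real.exp (-(2 * ρ)) ^ s := by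
        rw [mul_pow, ← Real.exp_nat_mul, ← Real.exp_nat_mul]; ring_nf
  calc ‖(A ^ s)ᵀ * Q * A ^ s‖ ≤ ‖(A ^ s)ᵀ‖ * ‖Q‖ * ‖A ^ s‖ :=
        (l2_opNorm_mul _ _).trans (mul_le_mul_of_nonneg_right (l2_opNorm_mul _ _) (norm_nonneg _))
    _ = ‖Q‖ * ‖A ^ s‖ ^ 2 := by
        rw [← conjTranspose_eq_transpose_of_trivial, l2_opNorm_conjTranspose]; ring
    _ ≤ τ ^ 2 * ‖Q‖ * Real.exp (-(2 * ρ)) ^ s := by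
        nlinarith [norm_nonneg Q]

def truncPow (A : Matrix n n ℝ) (k t : ℕ) : Matrix n n ℝ :=
  if k ≤ t then A ^ (t - k) else 0

lemma hasSum_transpose_truncPow_mul_mul_truncPow_add {A Q G : Matrix n n ℝ}
    (hG : HasSum (fun s : ℕ => (A ^ s)ᵀ * Q * A ^ s) G) (k d : ℕ) :
    HasSum (fun t => (truncPow A k t)ᵀ * Q * truncPow A (k + d) t) ((A ^ d)ᵀ * G) := by
  have hshift (s : ℕ) : (truncPow A k (s + (k + d)))ᵀ * Q * truncPow A (k + d) (s + (k + d))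
      = (A ^ d)ᵀ * ((A ^ s)ᵀ * Q * A ^ s) := by
    rw [truncPow, truncPow, if_pos (by omega), if_pos le_add_self,
      show s + (k + d) - k = s + d by omega, Nat.add_sub_cancel, pow_add, transpose_mul]
    simp only [Matrix.mul_assoc]
  have hvanish (t : ℕ) (ht : t ∈ Finset.range (k + d)) :
      (truncPow A k t)ᵀ * Q * truncPow A (k + d) t = 0 := by
    have : ¬k + d ≤ t := by simpa using ht
    simp [truncPow, this]
  rw [← hasSum_nat_add_iff' (k + d), Finset.sum_eq_zero hvanish, sub_zero, funext hshift]
  exact hG.mul_left _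

lemma hasSum_transpose_truncPow_add_mul_mul_truncPow {A Q G : Matrix n n ℝ}
    (hG : HasSum (fun s : ℕ => (A ^ s)ᵀ * Q * A ^ s) G) (k d : ℕ) :
    HasSum (fun t => (truncPow A (k + d) t)ᵀ * Q * truncPow A k t) (G * A ^ d) := by
  have hshift (s : ℕ) : (truncPow A (k + d) (s + (k + d)))ᵀ * Q * truncPow A k (s + (k + d))
      = (A ^ s)ᵀ * Q * A ^ s * A ^ d := by
    rw [truncPow, truncPow, if_pos le_add_self, if_pos (by omega),
      show s + (k + d) - k = s + d by omega, Nat.add_sub_cancel, pow_add]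
    simp only [Matrix.mul_assoc]
  have hvanish (t : ℕ) (ht : t ∈ Finset.range (k + d)) :
      (truncPow A (k + d) t)ᵀ * Q * truncPow A k t = 0 := by
    have : ¬k + d ≤ t := by simpa using ht
    simp [truncPow, this]
  rw [← hasSum_nat_add_iff' (k + d), Finset.sum_eq_zero hvanish, sub_zero, funext hshift]
  exact hG.mul_right _

lemma hasSum_transpose_truncPow_mul_mul_truncPow {A Q G : Matrix n n ℝ}
    (hG : HasSum (fun s : ℕ => (A ^ s)ᵀ * Q * A ^ s) G) (k m : ℕ) :
    HasSum (fun t => (truncPow A k t)ᵀ * Q * truncPow A m t)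
      (if m ≤ k then G * A ^ (k - m) else (A ^ (m - k))ᵀ * G) := by
  split_ifs with hmk
  · obtain ⟨d, rfl⟩ := Nat.exists_eq_add_of_le hmk
    simpa using hasSum_transpose_truncPow_add_mul_mul_truncPow hG m d
  · obtain ⟨d, rfl⟩ := Nat.exists_eq_add_of_le (Nat.le_of_not_le hmk)
    simpa using hasSum_transpose_truncPow_mul_mul_truncPow_add hG k d

end Matrix

lemma Arow_succ {nx : ℕ} (H t : ℕ) (A : Matrix (Fin nx) (Fin nx) ℝ) :
    Arow H A (t + 1) = Matrix.of fun a p => truncPow A p.1 t a p.2 := by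
  ext a p
  simp only [Arow, truncPow, of_apply, Nat.add_le_add_iff_right, Nat.add_sub_cancel]

theorem LamH_eq_tsum_general
    {nx : ℕ} (A Q : Matrix (Fin nx) (Fin nx) ℝ)
    (τ ρ : ℝ) (hρ : 0 < ρ)
    (hAst : IsExpStable τ ρ A) (H : ℕ) :
    LamH H A Q = ∑' t : ℕ, (Arow H A (t + 1))ᵀ * Q * Arow H A (t + 1) := by
  have hG := (hAst.summable_transpose_pow_mul_mul_pow hρ Q).hasSum
  refine (Pi.hasSum.mpr fun p => Pi.hasSum.mpr fun q => ?_).tsum_eq.symm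
  simp only [Arow_succ]
  -- the `(p.1, q.1)` block of the `t`-th term is `(truncPow A p.1 t)ᵀ * Q * truncPow A q.1 t`
  exact Pi.hasSum.mp (Pi.hasSum.mp (hasSum_transpose_truncPow_mul_mul_truncPow hG p.1 q.1) p.2) q.2

/-- Lemma: `Λ^{(H+1)} = ∑_{t≥1} (A_t^{(H+1)})ᵀ Q A_t^{(H+1)}`. -/
theorem LamH_eq_tsum
    {nx : ℕ} (A Q : Matrix (Fin nx) (Fin nx) ℝ)
    (τ ρ : ℝ) (hτ : 1 ≤ τ) (hρ : 0 < ρ)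
    (hAst : IsExpStable τ ρ A) (H : ℕ) :
    LamH H A Q = ∑' t : ℕ, (Arow H A (t + 1))ᵀ * Q * Arow H A (t + 1) :=
  LamH_eq_tsum_general A Q τ ρ hρ hAst H
end
end
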